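/- The operator Ξ(p) exchanges the helicities of the boosted Elko spinors up to a factor ∓i: Ξ(p)·λ^S_{-,+} = -i·λ^S_{+,-}, Ξ(p)·λ^S_{+,-} = i·λ^S_{-,+}, Ξ(p)·λ^A_{-,+} = -i·λ^A_{+,-}, and Ξ(p)·λ^A_{+,-} = i·λ^A_{-,+}. Consequently [Ξ(p)·λ^{S/A}_{-,+}]†γ0 = +i·(λ^{S/A}_{+,-})†γ0 and [Ξ(p)·λ^{S/A}_{+,-}]†γ0 = -i·(λ^{S/A}_{-,+})†γ0, i.e. the Elko dual ¬λ := [Ξ(p)λ]†γ0 is the opposite-helicity Dirac dual up to a factor ±i. -/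

import Mathlib

open Matrix Complex

noncomputable section

/-- Pauli matrices -/
def σ1 : Matrix (Fin 2) (Fin 2) ℂ := !![0, 1; 1, 0]
def σ2 : Matrix (Fin 2) (Fin 2) ℂ := !![0, -I; I, 0]
def σ3 : Matrix (Fin 2) (Fin 2) ℂ := !![1, 0; 0, -1]

/-- Dirac matrices in the Weyl representation, blocks [[0,1],[1,0]], [[0,σk],[-σk,0]] -/
def γ0 : Matrix (Fin 4) (Fin 4) ℂ := !![0,0,1,0; 0,0,0,1; 1,0,0,0; 0,1,0,0]
def γ1 : Matrix (Fin 4) (Fin 4) ℂ := !![0,0,0,1; 0,0,1,0; 0,-1,0,0; -1,0,0,0]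
def γ2 : Matrix (Fin 4) (Fin 4) ℂ := !![0,0,0,-I; 0,0,I,0; 0,I,0,0; -I,0,0,0]
def γ3 : Matrix (Fin 4) (Fin 4) ℂ := !![0,0,1,0; 0,0,0,-1; -1,0,0,0; 0,1,0,0]

/-- the energy E = sqrt(p² + m²) -/
def Ee (m p : ℝ) : ℝ := Real.sqrt (p^2 + m^2)
/-- boost factors B± = sqrt((E+m)/2)(1 ± p/(E+m)) -/
def Bp (m p : ℝ) : ℝ := Real.sqrt ((Ee m p + m)/2) * (1 + p/(Ee m p + m))
def Bm (m p : ℝ) : ℝ := Real.sqrt ((Ee m p + m)/2) * (1 - p/(Ee m p + m))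

/-- e^{iφ/2}, e^{-iφ/2}, e^{iφ}, e^{-iφ} -/
def eP (φ : ℝ) : ℂ := Complex.exp (I * (φ:ℂ) / 2)
def eM (φ : ℝ) : ℂ := Complex.exp (-(I * (φ:ℂ)) / 2)
def ePf (φ : ℝ) : ℂ := Complex.exp (I * (φ:ℂ))
def eMf (φ : ℝ) : ℂ := Complex.exp (-(I * (φ:ℂ)))

/-- boosted Elko spinors -/
def lamS₁ (m p θ φ : ℝ) : Fin 4 → ℂ :=
  ((Bm m p : ℝ) : ℂ) • ![ -I * (Real.sin (θ/2) : ℂ) * eM φ,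
                           I * (Real.cos (θ/2) : ℂ) * eP φ,
                           (Real.cos (θ/2) : ℂ) * eM φ,
                           (Real.sin (θ/2) : ℂ) * eP φ ]

def lamS₂ (m p θ φ : ℝ) : Fin 4 → ℂ :=
  ((Bp m p : ℝ) : ℂ) • ![ I * (Real.cos (θ/2) : ℂ) * eM φ,
                           I * (Real.sin (θ/2) : ℂ) * eP φ,
                           (Real.sin (θ/2) : ℂ) * eM φ,
                           -(Real.cos (θ/2) : ℂ) * eP φ ]

def lamA₁ (m p θ φ : ℝ) : Fin 4 → ℂ :=
  ((Bm m p : ℝ) : ℂ) • ![ I * (Real.sin (θ/2) : ℂ) * eM φ,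
                           -I * (Real.cos (θ/2) : ℂ) * eP φ,
                           (Real.cos (θ/2) : ℂ) * eM φ,
                           (Real.sin (θ/2) : ℂ) * eP φ ]

def lamA₂ (m p θ φ : ℝ) : Fin 4 → ℂ :=
  ((Bp m p : ℝ) : ℂ) • ![ -I * (Real.cos (θ/2) : ℂ) * eM φ,
                           -I * (Real.sin (θ/2) : ℂ) * eP φ,
                           (Real.sin (θ/2) : ℂ) * eM φ,
                           -(Real.cos (θ/2) : ℂ) * eP φ ]

/-- the Ξ(p) operator -/
def Ξop (m p θ φ : ℝ) : Matrix (Fin 4) (Fin 4) ℂ :=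
  (1/(m:ℂ)) •
    !![ I * ((p * Real.sin θ : ℝ) : ℂ),
        -I * ((Ee m p + p * Real.cos θ : ℝ) : ℂ) * eMf φ, 0, 0;
        I * ((Ee m p - p * Real.cos θ : ℝ) : ℂ) * ePf φ,
        -I * ((p * Real.sin θ : ℝ) : ℂ), 0, 0;
        0, 0, -I * ((p * Real.sin θ : ℝ) : ℂ),
        -I * ((Ee m p - p * Real.cos θ : ℝ) : ℂ) * eMf φ;
        0, 0, I * ((Ee m p + p * Real.cos θ : ℝ) : ℂ) * ePf φ,
        I * ((p * Real.sin θ : ℝ) : ℂ) ]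

/-- the G(φ) matrix appearing in the Elko spin sums -/
def Gmat (φ : ℝ) : Matrix (Fin 4) (Fin 4) ℂ :=
  !![0, 0, 0, -I * eMf φ;
     0, 0, I * ePf φ, 0;
     0, -I * eMf φ, 0, 0;
     I * ePf φ, 0, 0, 0]

/-- momentum slash pslash = E γ0 + p sinθ cosφ γ1 + p sinθ sinφ γ2 + p cosθ γ3 -/
def pslash (m p θ φ : ℝ) : Matrix (Fin 4) (Fin 4) ℂ :=
  ((Ee m p : ℝ) : ℂ) • γ0 + ((p * Real.sin θ * Real.cos φ : ℝ) : ℂ) • γ1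
    + ((p * Real.sin θ * Real.sin φ : ℝ) : ℂ) • γ2 + ((p * Real.cos θ : ℝ) : ℂ) • γ3

/-- Elko dual rows ¬λ -/
def dS₁ (m p θ φ : ℝ) : Fin 4 → ℂ := I • Matrix.vecMul (star (lamS₂ m p θ φ)) γ0
def dS₂ (m p θ φ : ℝ) : Fin 4 → ℂ := (-I) • Matrix.vecMul (star (lamS₁ m p θ φ)) γ0
def dA₁ (m p θ φ : ℝ) : Fin 4 → ℂ := I • Matrix.vecMul (star (lamA₂ m p θ φ)) γ0
def dA₂ (m p θ φ : ℝ) : Fin 4 → ℂ := (-I) • Matrix.vecMul (star (lamA₁ m p θ φ)) γ0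

end


/-! In the Weyl representation both diagonal blocks of `Ξ(p)` are `m⁻¹ (E σ·φ̂ ∓ i p σ·θ̂)`.
The helicity eigenspinors `ξ±` of `σ·p̂` are exchanged by `σ·θ̂` and, up to `±i`, by `σ·φ̂`;
hence each block maps one helicity to the other, with the factor `i (E ± p) / m`. The boost
identities `B₋ (E + p) = m B₊` and `B₊ (E - p) = m B₋` (both from `E² = p² + m²`) turn these
factors into `∓i`, and the statements about the duals follow by conjugation. -/

noncomputable section

lemma Ee_sq (m p : ℝ) : Ee m p ^ 2 = p ^ 2 + m ^ 2 := Real.sq_sqrt (by positivity)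

-- If `E + m = 0` both boost factors vanish, because `√0 = 0`.
lemma Bm_mul_Ee_add (m p : ℝ) : Bm m p * (Ee m p + p) = m * Bp m p := by
  by_cases h : Ee m p + m = 0
  · simp [Bm, Bp, h]
  · rw [Bm, Bp, mul_assoc, mul_left_comm m]
    congr 1
    field_simp
    linear_combination Ee_sq m p

lemma Bp_mul_Ee_sub (m p : ℝ) : Bp m p * (Ee m p - p) = m * Bm m p := by
  by_cases h : Ee m p + m = 0
  · simp [Bm, Bp, h]
  · rw [Bm, Bp, mul_assoc, mul_left_comm m]
    congr 1
    field_simp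
    linear_combination Ee_sq m p

lemma sin_mul_cos_half_sub_cos_mul_sin_half (z : ℂ) :
    Complex.sin z * Complex.cos (z / 2) - Complex.cos z * Complex.sin (z / 2) =
      Complex.sin (z / 2) := by
  rw [← Complex.sin_sub]; ring_nf

lemma cos_mul_cos_half_add_sin_mul_sin_half (z : ℂ) :
    Complex.cos z * Complex.cos (z / 2) + Complex.sin z * Complex.sin (z / 2) =
      Complex.cos (z / 2) := by
  rw [← Complex.cos_sub]; ring_nf

section Helicity

variable (θ φ : ℝ)

lemma eP_mul_eM : eP φ * eM φ = 1 := by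
  rw [eP, eM, ← Complex.exp_add, ← Complex.exp_zero]
  ring_nf

lemma eP_mul_eP : eP φ * eP φ = ePf φ := by
  rw [eP, ePf, ← Complex.exp_add]
  ring_nf

lemma eM_mul_eM : eM φ * eM φ = eMf φ := by
  rw [eM, eMf, ← Complex.exp_add]
  ring_nf

-- The eigenspinors of `σ·p̂` for `p̂ = (sin θ cos φ, sin θ sin φ, cos θ)`, with eigenvalues `±1`.
def helicityPlus : Fin 2 → ℂ := ![(Real.cos (θ/2) : ℂ) * eM φ, (Real.sin (θ/2) : ℂ) * eP φ]

def helicityMinus : Fin 2 → ℂ := ![-(Real.sin (θ/2) : ℂ) * eM φ, (Real.cos (θ/2) : ℂ) * eP φ]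

-- `σθ = σ·θ̂` and `σφ = σ·φ̂` for the spherical unit vectors `θ̂`, `φ̂` at the direction `p̂`.
def σθ : Matrix (Fin 2) (Fin 2) ℂ :=
  !![-(Real.sin θ : ℂ), (Real.cos θ : ℂ) * eMf φ; (Real.cos θ : ℂ) * ePf φ, (Real.sin θ : ℂ)]

def σφ : Matrix (Fin 2) (Fin 2) ℂ := !![0, -I * eMf φ; I * ePf φ, 0]

lemma σθ_mulVec_helicityPlus : σθ θ φ *ᵥ helicityPlus θ φ = helicityMinus θ φ := by
  have hs := sin_mul_cos_half_sub_cos_mul_sin_half (θ : ℂ)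
  have hc := cos_mul_cos_half_add_sin_mul_sin_half (θ : ℂ)
  rw [mulVec_fin_two]
  simp only [σθ, helicityPlus, helicityMinus, of_apply, cons_val_zero, cons_val_one,
    cons_val_fin_one, ← eP_mul_eP, ← eM_mul_eM]
  push_cast
  refine vec2_eq ?_ ?_
  · linear_combination -eM φ * hs + eM φ * cos θ * sin (θ/2) * eP_mul_eM φ
  · linear_combination eP φ * hc + eP φ * cos θ * cos (θ/2) * eP_mul_eM φ

lemma σθ_mulVec_helicityMinus : σθ θ φ *ᵥ helicityMinus θ φ = helicityPlus θ φ := by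
  have hs := sin_mul_cos_half_sub_cos_mul_sin_half (θ : ℂ)
  have hc := cos_mul_cos_half_add_sin_mul_sin_half (θ : ℂ)
  rw [mulVec_fin_two]
  simp only [σθ, helicityPlus, helicityMinus, of_apply, cons_val_zero, cons_val_one,
    cons_val_fin_one, ← eP_mul_eP, ← eM_mul_eM]
  push_cast
  refine vec2_eq ?_ ?_
  · linear_combination eM φ * hc + eM φ * cos θ * cos (θ/2) * eP_mul_eM φ
  · linear_combination eP φ * hs - eP φ * cos θ * sin (θ/2) * eP_mul_eM φ

lemma σφ_mulVec_helicityPlus : σφ φ *ᵥ helicityPlus θ φ = I • helicityMinus θ φ := by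
  rw [mulVec_fin_two]
  simp only [σφ, helicityPlus, helicityMinus, of_apply, cons_val_zero, cons_val_one,
    cons_val_fin_one, ← eP_mul_eP, ← eM_mul_eM, smul_cons, smul_eq_mul, smul_empty]
  push_cast
  refine vec2_eq ?_ ?_
  · linear_combination -I * eM φ * sin (θ/2) * eP_mul_eM φ
  · linear_combination I * eP φ * cos (θ/2) * eP_mul_eM φ

lemma σφ_mulVec_helicityMinus : σφ φ *ᵥ helicityMinus θ φ = -I • helicityPlus θ φ := by
  rw [mulVec_fin_two]
  simp only [σφ, helicityPlus, helicityMinus, of_apply, cons_val_zero, cons_val_one,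
    cons_val_fin_one, ← eP_mul_eP, ← eM_mul_eM, smul_cons, smul_eq_mul, smul_empty]
  push_cast
  refine vec2_eq ?_ ?_
  · linear_combination -I * eM φ * cos (θ/2) * eP_mul_eM φ
  · linear_combination -I * eP φ * sin (θ/2) * eP_mul_eM φ

lemma smul_σφ_add_smul_σθ_mulVec_helicityPlus (a b : ℂ) :
    (a • σφ φ + b • σθ θ φ) *ᵥ helicityPlus θ φ = (I * a + b) • helicityMinus θ φ := by
  rw [add_mulVec, smul_mulVec, smul_mulVec, σφ_mulVec_helicityPlus, σθ_mulVec_helicityPlus,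
    smul_smul, add_smul, mul_comm]

lemma smul_σφ_add_smul_σθ_mulVec_helicityMinus (a b : ℂ) :
    (a • σφ φ + b • σθ θ φ) *ᵥ helicityMinus θ φ = (b - I * a) • helicityPlus θ φ := by
  rw [add_mulVec, smul_mulVec, smul_mulVec, σφ_mulVec_helicityMinus, σθ_mulVec_helicityMinus,
    smul_smul, sub_eq_add_neg, add_smul, add_comm, mul_neg, mul_comm]

end Helicity

section Weyl

def weyl (u v : Fin 2 → ℂ) : Fin 4 → ℂ := ![u 0, u 1, v 0, v 1]

lemma smul_weyl (c : ℂ) (u v : Fin 2 → ℂ) : c • weyl u v = weyl (c • u) (c • v) := by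
  ext i
  fin_cases i <;> rfl

variable (m p θ φ : ℝ)

lemma Ξop_mulVec_weyl (u v : Fin 2 → ℂ) :
    Ξop m p θ φ *ᵥ weyl u v =
      (1 / (m : ℂ)) • weyl (((Ee m p : ℂ) • σφ φ + (-I * p) • σθ θ φ) *ᵥ u)
        (((Ee m p : ℂ) • σφ φ + (I * p) • σθ θ φ) *ᵥ v) := by
  ext i
  fin_cases i <;> simp [Ξop, weyl, σφ, σθ, mulVec, dotProduct, Fin.sum_univ_four] <;> ring

lemma Ξop_mulVec_weyl_helicityMinus_helicityPlus (α β : ℂ) :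
    Ξop m p θ φ *ᵥ weyl (α • helicityMinus θ φ) (β • helicityPlus θ φ) =
      (I * (Ee m p + p) / m : ℂ) • weyl (-α • helicityPlus θ φ) (β • helicityMinus θ φ) := by
  rw [Ξop_mulVec_weyl, mulVec_smul, mulVec_smul, smul_σφ_add_smul_σθ_mulVec_helicityMinus,
    smul_σφ_add_smul_σθ_mulVec_helicityPlus]
  simp only [smul_weyl, smul_smul]
  congr 2 <;> ring

lemma Ξop_mulVec_weyl_helicityPlus_helicityMinus (α β : ℂ) :
    Ξop m p θ φ *ᵥ weyl (α • helicityPlus θ φ) (β • helicityMinus θ φ) =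
      (I * (Ee m p - p) / m : ℂ) • weyl (α • helicityMinus θ φ) (-β • helicityPlus θ φ) := by
  rw [Ξop_mulVec_weyl, mulVec_smul, mulVec_smul, smul_σφ_add_smul_σθ_mulVec_helicityMinus,
    smul_σφ_add_smul_σθ_mulVec_helicityPlus]
  simp only [smul_weyl, smul_smul]
  congr 2 <;> ring

end Weyl

section Elko

variable (m p θ φ : ℝ)

lemma lamS₁_eq_weyl : lamS₁ m p θ φ =
    weyl ((Bm m p * I : ℂ) • helicityMinus θ φ) ((Bm m p : ℂ) • helicityPlus θ φ) := by
  ext i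
  fin_cases i <;> simp [lamS₁, weyl, helicityPlus, helicityMinus] <;> ring

lemma lamS₂_eq_weyl : lamS₂ m p θ φ =
    weyl ((Bp m p * I : ℂ) • helicityPlus θ φ) (-(Bp m p : ℂ) • helicityMinus θ φ) := by
  ext i
  fin_cases i <;> simp [lamS₂, weyl, helicityPlus, helicityMinus] <;> ring

lemma lamA₁_eq_weyl : lamA₁ m p θ φ =
    weyl (-(Bm m p * I : ℂ) • helicityMinus θ φ) ((Bm m p : ℂ) • helicityPlus θ φ) := by
  ext i
  fin_cases i <;> simp [lamA₁, weyl, helicityPlus, helicityMinus] <;> ring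

lemma lamA₂_eq_weyl : lamA₂ m p θ φ =
    weyl (-(Bp m p * I : ℂ) • helicityPlus θ φ) (-(Bp m p : ℂ) • helicityMinus θ φ) := by
  ext i
  fin_cases i <;> simp [lamA₂, weyl, helicityPlus, helicityMinus] <;> ring

variable {m}

lemma Bp_eq_Bm_mul_div (hm : m ≠ 0) : Bp m p = Bm m p * (Ee m p + p) / m := by
  rw [Bm_mul_Ee_add, mul_div_cancel_left₀ _ hm]

lemma Bm_eq_Bp_mul_div (hm : m ≠ 0) : Bm m p = Bp m p * (Ee m p - p) / m := by
  rw [Bp_mul_Ee_sub, mul_div_cancel_left₀ _ hm]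

lemma Ξop_mulVec_lamS₁ (hm : m ≠ 0) : Ξop m p θ φ *ᵥ lamS₁ m p θ φ = -I • lamS₂ m p θ φ := by
  rw [lamS₁_eq_weyl, lamS₂_eq_weyl, Ξop_mulVec_weyl_helicityMinus_helicityPlus,
    Bp_eq_Bm_mul_div p hm]
  simp only [smul_weyl, smul_smul]
  push_cast
  congr 2 <;> ring

lemma Ξop_mulVec_lamS₂ (hm : m ≠ 0) : Ξop m p θ φ *ᵥ lamS₂ m p θ φ = I • lamS₁ m p θ φ := by
  rw [lamS₁_eq_weyl, lamS₂_eq_weyl, Ξop_mulVec_weyl_helicityPlus_helicityMinus,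
    Bm_eq_Bp_mul_div p hm]
  simp only [smul_weyl, smul_smul]
  push_cast
  congr 2 <;> ring

lemma Ξop_mulVec_lamA₁ (hm : m ≠ 0) : Ξop m p θ φ *ᵥ lamA₁ m p θ φ = -I • lamA₂ m p θ φ := by
  rw [lamA₁_eq_weyl, lamA₂_eq_weyl, Ξop_mulVec_weyl_helicityMinus_helicityPlus,
    Bp_eq_Bm_mul_div p hm]
  simp only [smul_weyl, smul_smul]
  push_cast
  congr 2 <;> ring

lemma Ξop_mulVec_lamA₂ (hm : m ≠ 0) : Ξop m p θ φ *ᵥ lamA₂ m p θ φ = I • lamA₁ m p θ φ := by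
  rw [lamA₁_eq_weyl, lamA₂_eq_weyl, Ξop_mulVec_weyl_helicityPlus_helicityMinus,
    Bm_eq_Bp_mul_div p hm]
  simp only [smul_weyl, smul_smul]
  push_cast
  congr 2 <;> ring

end Elko

end

theorem xi_exchanges_helicities_general (m p θ φ : ℝ) (hm : 0 < m) :
    (Ξop m p θ φ).mulVec (lamS₁ m p θ φ) = (-I) • lamS₂ m p θ φ ∧
    (Ξop m p θ φ).mulVec (lamS₂ m p θ φ) = I • lamS₁ m p θ φ ∧
    (Ξop m p θ φ).mulVec (lamA₁ m p θ φ) = (-I) • lamA₂ m p θ φ ∧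
    (Ξop m p θ φ).mulVec (lamA₂ m p θ φ) = I • lamA₁ m p θ φ ∧
    Matrix.vecMul (star ((Ξop m p θ φ).mulVec (lamS₁ m p θ φ))) γ0 =
      I • Matrix.vecMul (star (lamS₂ m p θ φ)) γ0 ∧
    Matrix.vecMul (star ((Ξop m p θ φ).mulVec (lamA₁ m p θ φ))) γ0 =
      I • Matrix.vecMul (star (lamA₂ m p θ φ)) γ0 ∧
    Matrix.vecMul (star ((Ξop m p θ φ).mulVec (lamS₂ m p θ φ))) γ0 =
      (-I) • Matrix.vecMul (star (lamS₁ m p θ φ)) γ0 ∧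
    Matrix.vecMul (star ((Ξop m p θ φ).mulVec (lamA₂ m p θ φ))) γ0 =
      (-I) • Matrix.vecMul (star (lamA₁ m p θ φ)) γ0 := by
  have hS₁ := Ξop_mulVec_lamS₁ p θ φ hm.ne'
  have hS₂ := Ξop_mulVec_lamS₂ p θ φ hm.ne'
  have hA₁ := Ξop_mulVec_lamA₁ p θ φ hm.ne'
  have hA₂ := Ξop_mulVec_lamA₂ p θ φ hm.ne'
  refine ⟨hS₁, hS₂, hA₁, hA₂, ?_, ?_, ?_, ?_⟩ <;>
    simp only [hS₁, hS₂, hA₁, hA₂, star_smul, smul_vecMul, star_neg, Complex.star_def, conj_I, neg_neg]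

/-- Ξ(p) exchanges helicities of the boosted Elko spinors up to ∓i, and consequently the
Elko dual ¬λ := [Ξ(p)λ]†γ0 is the opposite-helicity Dirac dual up to a factor ±i. -/
theorem xi_exchanges_helicities (m p θ φ : ℝ) (hm : 0 < m) (hp : 0 ≤ p) :
    (Ξop m p θ φ).mulVec (lamS₁ m p θ φ) = (-I) • lamS₂ m p θ φ ∧
    (Ξop m p θ φ).mulVec (lamS₂ m p θ φ) = I • lamS₁ m p θ φ ∧
    (Ξop m p θ φ).mulVec (lamA₁ m p θ φ) = (-I) • lamA₂ m p θ φ ∧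
    (Ξop m p θ φ).mulVec (lamA₂ m p θ φ) = I • lamA₁ m p θ φ ∧
    Matrix.vecMul (star ((Ξop m p θ φ).mulVec (lamS₁ m p θ φ))) γ0 =
      I • Matrix.vecMul (star (lamS₂ m p θ φ)) γ0 ∧
    Matrix.vecMul (star ((Ξop m p θ φ).mulVec (lamA₁ m p θ φ))) γ0 =
      I • Matrix.vecMul (star (lamA₂ m p θ φ)) γ0 ∧
    Matrix.vecMul (star ((Ξop m p θ φ).mulVec (lamS₂ m p θ φ))) γ0 =
      (-I) • Matrix.vecMul (star (lamS₁ m p θ φ)) γ0 ∧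
    Matrix.vecMul (star ((Ξop m p θ φ).mulVec (lamA₂ m p θ φ))) γ0 =
      (-I) • Matrix.vecMul (star (lamA₁ m p θ φ)) γ0 :=
  xi_exchanges_helicities_general m p θ φ hm
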